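/- Let X be an irreducible, aperiodic, stationary first-order Markov chain on the finite alphabet 𝒳, g: 𝒳 → 𝒴, and Y_n := g(X_n). Then for every k ≥ 1, Δ_L^k(X, g) ≥ Δ_L^{k+1}(X, g), and lim_{k→∞} Δ_L^k(X, g) = 0. -/

import Mathlib

open Filter

section MarkovAggregation

variable {𝒳 : Type*} {𝒴 : Type*} [Fintype 𝒳] [DecidableEq 𝒳] [Fintype 𝒴] [DecidableEq 𝒴]

/-- Shannon entropy of a probability mass function on a finite set. -/
noncomputable def entPMF {α : Type*} [Fintype α] (p : α → ℝ) : ℝ :=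
  ∑ a : α, Real.negMulLog (p a)

/-- Marginal of a joint pmf on the first component. -/
noncomputable def margFst {α β : Type*} [Fintype β] (p : α × β → ℝ) : α → ℝ :=
  fun a => ∑ b : β, p (a, b)

/-- Marginal of a joint pmf on the second component. -/
noncomputable def margSnd {α β : Type*} [Fintype α] (p : α × β → ℝ) : β → ℝ :=
  fun b => ∑ a : α, p (a, b)

/-- Conditional Shannon entropy H(A | B) of a joint pmf `p` of the pair (A, B). -/
noncomputable def condEntPMF {α β : Type*} [Fintype α] [Fintype β] (p : α × β → ℝ) : ℝ :=
  entPMF p - entPMF (margSnd p)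

/-- Mutual information I(A ; B) of a joint pmf `p` of the pair (A, B). -/
noncomputable def mutInfPMF {α β : Type*} [Fintype α] [Fintype β] (p : α × β → ℝ) : ℝ :=
  entPMF (margFst p) + entPMF (margSnd p) - entPMF p

/-- Probability that a first-order Markov chain with initial distribution `π` and transition
matrix `P` emits the path (x_0, ..., x_{n-1}). -/
noncomputable def xPath (π : 𝒳 → ℝ) (P : Matrix 𝒳 𝒳 ℝ) (n : ℕ) (x : Fin n → 𝒳) : ℝ :=
  (if h : 0 < n then π (x ⟨0, h⟩) else 1) *
    ∏ i : Fin n, if h : i.val + 1 < n then P (x i) (x ⟨i.val + 1, h⟩) else 1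

/-- Probability that the projection Y_n = g(X_n) emits the path (y_0, ..., y_{n-1}). -/
noncomputable def yPath (π : 𝒳 → ℝ) (P : Matrix 𝒳 𝒳 ℝ) (g : 𝒳 → 𝒴) (n : ℕ)
    (y : Fin n → 𝒴) : ℝ :=
  ∑ x : Fin n → 𝒳, if ∀ i, g (x i) = y i then xPath π P n x else 0

/-- Joint probability of (X_1, (Y_2, ..., Y_{m+1})). -/
noncomputable def xyPath (π : 𝒳 → ℝ) (P : Matrix 𝒳 𝒳 ℝ) (g : 𝒳 → 𝒴) (m : ℕ)
    (x₀ : 𝒳) (y : Fin m → 𝒴) : ℝ :=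
  ∑ x : Fin (m + 1) → 𝒳,
    if x 0 = x₀ ∧ ∀ i : Fin m, g (x i.succ) = y i then xPath π P (m + 1) x else 0

/-- A matrix is primitive iff some power (and all larger powers) of it is entrywise positive;
for a stochastic matrix this is equivalent to being irreducible and aperiodic. -/
def PrimitiveMatrix (P : Matrix 𝒳 𝒳 ℝ) : Prop :=
  ∃ N : ℕ, ∀ n : ℕ, N ≤ n → ∀ i j : 𝒳, 0 < (P ^ n) i j

/-- A Markov chain with transition matrix `P` is `k`-lumpable w.r.t. `g` iff for every initial
distribution `π` the projected process is a `k`-th order Markov chain whose transition matrix `Q`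
does not depend on `π`. -/
def Lumpable (P : Matrix 𝒳 𝒳 ℝ) (g : 𝒳 → 𝒴) (k : ℕ) : Prop :=
  ∃ Q : (Fin k → 𝒴) → 𝒴 → ℝ,
    ∀ π : 𝒳 → ℝ, (∀ x, 0 ≤ π x) → (∑ x, π x = 1) →
      ∀ n : ℕ, ∀ hn : k ≤ n, ∀ y : Fin n → 𝒴, ∀ j : 𝒴,
        yPath π P g (n + 1) (Fin.snoc y j) =
          yPath π P g n y *
            Q (fun i : Fin k => y ⟨n - k + i.val, by have := i.isLt; omega⟩) j

/-- The lumpability cost Δ_L^{k+1}(X, g) = H(Y_{k+2} | Y_1^{k+1}) - H(Y_{k+2} | Y_2^{k+1}, X_1),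
for the stationary chain with invariant distribution `μ` and transition matrix `P`. -/
noncomputable def lumpCost (μ : 𝒳 → ℝ) (P : Matrix 𝒳 𝒳 ℝ) (g : 𝒳 → 𝒴) (k : ℕ) : ℝ :=
  condEntPMF (fun q : 𝒴 × (Fin (k + 1) → 𝒴) => yPath μ P g (k + 2) (Fin.snoc q.2 q.1)) -
  condEntPMF (fun q : 𝒴 × (𝒳 × (Fin k → 𝒴)) =>
    xyPath μ P g (k + 1) q.2.1 (Fin.snoc q.2.2 q.1))

/-- The predictability cost Δ_P^{k+1}(X, g) = I(X_2 ; X_1) - I(Y_{k+2} ; Y_1^{k+1}),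
for the stationary chain with invariant distribution `μ` and transition matrix `P`. -/
noncomputable def predCost (μ : 𝒳 → ℝ) (P : Matrix 𝒳 𝒳 ℝ) (g : 𝒳 → 𝒴) (k : ℕ) : ℝ :=
  mutInfPMF (fun q : 𝒳 × 𝒳 => μ q.1 * P q.1 q.2) -
  mutInfPMF (fun q : 𝒴 × (Fin (k + 1) → 𝒴) => yPath μ P g (k + 2) (Fin.snoc q.2 q.1))

/-- Path probabilities of a stationary `K`-th order Markov chain on `𝒴` with stationary
`K`-dimensional distribution `ρ` and transition matrix `R`. -/
noncomputable def mkvPath {K : ℕ} (ρ : (Fin K → 𝒴) → ℝ) (R : (Fin K → 𝒴) → 𝒴 → ℝ)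
    (n : ℕ) (y : Fin n → 𝒴) : ℝ :=
  if h : K ≤ n then
    ρ (fun i => y ⟨i.val, lt_of_lt_of_le i.isLt h⟩) *
      ∏ m : Fin n, if hm : K ≤ m.val then
        R (fun i => y ⟨m.val - K + i.val, by have h1 := i.isLt; have h2 := m.isLt; omega⟩) (y m)
      else 1
  else
    ∑ z : Fin K → 𝒴, if ∀ i : Fin n, z ⟨i.val, by have := i.isLt; omega⟩ = y i then ρ z else 0

end MarkovAggregation


/-!
Write `Δ_L^{k+1} = H(Y_{k+2} | Y_1^{k+1}) - H(Y_{k+2} | X_1, Y_2^{k+1})`. By stationarity the first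
term equals `H(Y_{k+3} | Y_2^{k+2})`, which only decreases when `Y_1` is added to the condition. By
the Markov property the second equals `H(Y_{k+3} | X_1, X_2, Y_3^{k+2})`, which only increases when
`X_2` is coarsened to `Y_2`. Hence `Δ_L` is non-increasing; it is non-negative because `Y_1` is a
function of `X_1`. Both terms are increments of block entropies, so the partial sums telescope to
`H(Y_1^{n+1}) - H(X_1, Y_2^{n+1}) + H(X_1) - H(Y_1) ≤ H(X_1) - H(Y_1)`, and a non-negative series
with bounded partial sums has terms tending to `0`.
-/

open Finset

section FiniteEntropy

open Real

variable {Ω α β γ : Type*} [Fintype α]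

lemma negMulLog_add_le {x y : ℝ} (hx : 0 ≤ x) (hy : 0 ≤ y) :
    negMulLog (x + y) ≤ negMulLog x + negMulLog y := by
  rcases hx.eq_or_lt with rfl | hx
  · simp
  rcases hy.eq_or_lt with rfl | hy
  · simp
  have := log_le_log hx (le_add_of_nonneg_right hy.le)
  have := log_le_log hy (le_add_of_nonneg_left hx.le)
  simp only [negMulLog, neg_mul, add_mul]
  nlinarith

lemma negMulLog_sum_le {ι : Type*} (s : Finset ι) {p : ι → ℝ} (hp : ∀ i ∈ s, 0 ≤ p i) :
    negMulLog (∑ i ∈ s, p i) ≤ ∑ i ∈ s, negMulLog (p i) := by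
  induction s using Finset.cons_induction with
  | empty => simp
  | cons i s his ih =>
    rw [sum_cons, sum_cons]
    refine (negMulLog_add_le (hp i (mem_cons_self i s))
      (sum_nonneg fun j hj => hp j (mem_cons_of_mem hj))).trans ?_
    gcongr
    exact ih fun j hj => hp j (mem_cons_of_mem hj)

/-- `h` guards against the junk value `p / 0 = 0`. -/
lemma mul_negMulLog_div {p m : ℝ} (h : m = 0 → p = 0) :
    m * negMulLog (p / m) = negMulLog p + p * log m := by
  rcases eq_or_ne m 0 with rfl | hm
  · simp [h rfl]
  rcases eq_or_ne p 0 with rfl | hp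
  · simp
  rw [negMulLog, negMulLog, log_div hp hm]
  field_simp
  ring

/-- The log-sum inequality: Jensen's inequality for the perspective of `negMulLog`. -/
lemma sum_mul_negMulLog_div_le {ι : Type*} (s : Finset ι) {p m : ι → ℝ}
    (hp : ∀ i ∈ s, 0 ≤ p i) (hpm : ∀ i ∈ s, p i ≤ m i) :
    ∑ i ∈ s, m i * negMulLog (p i / m i) ≤
      (∑ i ∈ s, m i) * negMulLog ((∑ i ∈ s, p i) / ∑ i ∈ s, m i) := by
  have hm : ∀ i ∈ s, 0 ≤ m i := fun i hi => (hp i hi).trans (hpm i hi)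
  rcases (sum_nonneg hm).eq_or_lt with hM | hM
  · have hm0 : ∀ i ∈ s, m i = 0 := (sum_eq_zero_iff_of_nonneg hm).mp hM.symm
    rw [← hM, zero_mul]
    exact (sum_eq_zero fun i hi => by rw [hm0 i hi, zero_mul]).le
  have hmean : ∀ i ∈ s, m i * (p i / m i) = p i := fun i hi => by
    rcases (hm i hi).eq_or_lt with h | h
    · have := le_antisymm (h ▸ hpm i hi) (hp i hi)
      simp [← h, this]
    · exact mul_div_cancel₀ _ h.ne'
  have jensen := concaveOn_negMulLog.le_map_centerMass hm hM
    (p := fun i => p i / m i) fun i hi => div_nonneg (hp i hi) (hm i hi)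
  simp only [centerMass, Function.comp_def, smul_eq_mul] at jensen
  rwa [sum_congr rfl hmean, inv_mul_le_iff₀ hM, inv_mul_eq_div] at jensen

noncomputable def pmfMap [DecidableEq β] (f : α → β) (p : α → ℝ) (b : β) : ℝ :=
  ∑ a with f a = b, p a

section pmfMap

variable [DecidableEq β] [DecidableEq γ]

lemma pmfMap_nonneg (f : α → β) {p : α → ℝ} (hp : ∀ a, 0 ≤ p a) (b : β) : 0 ≤ pmfMap f p b :=
  sum_nonneg fun a _ => hp a

lemma pmfMap_pmfMap [Fintype β] (f : α → β) (g : β → γ) (p : α → ℝ) :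
    pmfMap g (pmfMap f p) = pmfMap (g ∘ f) p := by
  funext c
  simp only [pmfMap]
  rw [sum_fiberwise_eq_sum_filter]
  simp [mem_filter]

lemma pmfMap_equiv_comp (e : β ≃ γ) (f : α → β) (p : α → ℝ) (c : γ) :
    pmfMap (e ∘ f) p c = pmfMap f p (e.symm c) := by
  simp [pmfMap, ← Equiv.eq_symm_apply]

lemma pmfMap_mul_comp (f : α → β) (φ : β → ℝ) (p : α → ℝ) (b : β) :
    pmfMap f (fun a => φ (f a) * p a) b = φ b * pmfMap f p b := by
  rw [pmfMap, pmfMap, mul_sum]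
  exact sum_congr rfl fun a ha => by rw [(mem_filter.mp ha).2]

lemma margSnd_eq_pmfMap [Fintype β] [DecidableEq α] (p : α × β → ℝ) :
    margSnd p = pmfMap Prod.snd p := by
  funext b
  simp [margSnd, pmfMap, sum_filter, Fintype.sum_prod_type]

lemma entPMF_pmfMap_equiv_comp [Fintype β] [Fintype γ] (e : β ≃ γ) (f : α → β) (p : α → ℝ) :
    entPMF (pmfMap (e ∘ f) p) = entPMF (pmfMap f p) := by
  simp only [entPMF, pmfMap_equiv_comp]
  exact Fintype.sum_equiv e.symm _ _ fun _ => rfl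

lemma entPMF_pmfMap_le [Fintype β] (f : α → β) {p : α → ℝ} (hp : ∀ a, 0 ≤ p a) :
    entPMF (pmfMap f p) ≤ entPMF p := by
  rw [entPMF, entPMF, ← sum_fiberwise univ f]
  gcongr with b
  exact negMulLog_sum_le _ fun a _ => hp a

lemma pmfMap_init_apply [DecidableEq α] {n : ℕ} (p : (Fin (n + 1) → α) → ℝ) (y : Fin n → α) :
    pmfMap Fin.init p y = ∑ a, p (Fin.snoc y a) := by
  rw [pmfMap, sum_filter, ← (Fin.snocEquiv fun _ => α).sum_comp, Fintype.sum_prod_type]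
  simp [Fin.snocEquiv]

lemma pmfMap_tail_apply [DecidableEq α] {n : ℕ} (p : (Fin (n + 1) → α) → ℝ) (y : Fin n → α) :
    pmfMap Fin.tail p y = ∑ a, p (Fin.cons a y) := by
  rw [pmfMap, sum_filter, ← (Fin.consEquiv fun _ => α).sum_comp, Fintype.sum_prod_type]
  simp [Fin.consEquiv]

lemma pmfMap_tail_head_apply [DecidableEq α] {n : ℕ} (G : (Fin n → α) → β)
    (p : (Fin (n + 1) → α) → ℝ) (b : β) (a : α) :
    pmfMap (fun x => (G (Fin.tail x), x 0)) p (b, a) =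
      pmfMap G (fun x => p (Fin.cons a x)) b := by
  rw [pmfMap, pmfMap, sum_filter, sum_filter, ← (Fin.consEquiv fun _ => α).sum_comp,
    Fintype.sum_prod_type, sum_comm]
  simp [Fin.consEquiv, Prod.ext_iff, ite_and]

end pmfMap

/-- `H(A | B)` as the `B`-average of the entropies of the conditional laws of `A`. -/
lemma condEntPMF_eq_sum_mul_negMulLog_div [Fintype β] {p : α × β → ℝ} (hp : ∀ q, 0 ≤ p q) :
    condEntPMF p = ∑ b, ∑ a, margSnd p b * negMulLog (p (a, b) / margSnd p b) := by
  have hsupp : ∀ a b, margSnd p b = 0 → p (a, b) = 0 := fun a b hb =>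
    le_antisymm (hb ▸ single_le_sum (f := fun a => p (a, b)) (fun _ _ => hp _) (mem_univ a))
      (hp _)
  simp only [mul_negMulLog_div (hsupp _ _), sum_add_distrib, ← sum_mul]
  rw [condEntPMF, entPMF, entPMF, Fintype.sum_prod_type_right]
  simp only [negMulLog, margSnd, neg_mul, sum_neg_distrib]
  ring

lemma condEntPMF_le_pmfMap_prodMap [Fintype β] [Fintype γ] [DecidableEq α] [DecidableEq γ]
    (f : β → γ) {p : α × β → ℝ} (hp : ∀ q, 0 ≤ p q) :
    condEntPMF p ≤ condEntPMF (pmfMap (Prod.map id f) p) := by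
  have hq : ∀ a c, pmfMap (Prod.map id f) p (a, c) = ∑ b with f b = c, p (a, b) := by
    intro a c
    simp [pmfMap, sum_filter, Fintype.sum_prod_type, Prod.ext_iff, ite_and]
  have hm : margSnd (pmfMap (Prod.map id f) p) = pmfMap f (margSnd p) := by
    classical
    rw [margSnd_eq_pmfMap, margSnd_eq_pmfMap, pmfMap_pmfMap, pmfMap_pmfMap]
    rfl
  have hpm : ∀ a b, p (a, b) ≤ margSnd p b := fun a b =>
    single_le_sum (f := fun a => p (a, b)) (fun _ _ => hp _) (mem_univ a)
  rw [condEntPMF_eq_sum_mul_negMulLog_div hp,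
    condEntPMF_eq_sum_mul_negMulLog_div (pmfMap_nonneg _ hp), hm, ← sum_fiberwise univ f]
  simp only [hq]
  rw [sum_congr rfl fun c _ => sum_comm]
  gcongr with c _ a
  exact sum_mul_negMulLog_div_le _ (fun b _ => hp _) fun b _ => hpm a b

lemma condEntPMF_of_condIndep [Fintype β] [Fintype γ] {v : β → α → ℝ} {w : γ → β → ℝ}
    (hv : ∀ b a, 0 ≤ v b a) (hw : ∀ c b, 0 ≤ w c b) :
    condEntPMF (fun q : α × (β × γ) => v q.2.1 q.1 * w q.2.2 q.2.1) =
      condEntPMF (fun q : α × β => v q.2 q.1 * ∑ c, w c q.2) := by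
  have hcancel : ∀ {x y z : ℝ},
      y * z * negMulLog (x * z / (y * z)) = z * (y * negMulLog (x / y)) := fun {x y z} => by
      rcases eq_or_ne z 0 with rfl | hz
      · simp
      · rw [mul_div_mul_right _ _ hz]; ring
  rw [condEntPMF_eq_sum_mul_negMulLog_div fun _ => mul_nonneg (hv _ _) (hw _ _),
    condEntPMF_eq_sum_mul_negMulLog_div fun _ =>
      mul_nonneg (hv _ _) (sum_nonneg fun _ _ => hw _ _)]
  simp only [margSnd, ← sum_mul, hcancel, Fintype.sum_prod_type, ← mul_sum]

/-- `H(U | V)` for observables `U`, `V` on a sample space weighted by `ρ`. -/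
noncomputable def condEntOf [Fintype Ω] [Fintype β] [DecidableEq α] [DecidableEq β]
    (ρ : Ω → ℝ) (U : Ω → α) (V : Ω → β) : ℝ :=
  condEntPMF (pmfMap (fun ω => (U ω, V ω)) ρ)

section condEntOf

variable [Fintype Ω] [Fintype β] [DecidableEq α] [DecidableEq β]

lemma condEntOf_eq_sub (ρ : Ω → ℝ) (U : Ω → α) (V : Ω → β) :
    condEntOf ρ U V = entPMF (pmfMap (fun ω => (U ω, V ω)) ρ) - entPMF (pmfMap V ρ) := by
  rw [condEntOf, condEntPMF, margSnd_eq_pmfMap, pmfMap_pmfMap]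
  rfl

lemma condEntOf_le_comp [Fintype γ] [DecidableEq γ] {ρ : Ω → ℝ} (hρ : ∀ ω, 0 ≤ ρ ω)
    (U : Ω → α) (V : Ω → β) (f : β → γ) :
    condEntOf ρ U V ≤ condEntOf ρ U (fun ω => f (V ω)) := by
  refine (condEntPMF_le_pmfMap_prodMap f (pmfMap_nonneg _ hρ)).trans_eq ?_
  rw [pmfMap_pmfMap]
  rfl

lemma condEntOf_pmfMap {Ω' : Type*} [Fintype Ω'] [DecidableEq Ω] (T : Ω' → Ω) (ρ : Ω' → ℝ)
    (U : Ω → α) (V : Ω → β) :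
    condEntOf (pmfMap T ρ) U V = condEntOf ρ (fun ω => U (T ω)) (fun ω => V (T ω)) := by
  rw [condEntOf, pmfMap_pmfMap]
  rfl

end condEntOf

end FiniteEntropy

section MarkovPaths

variable {𝒳 : Type*} (π μ : 𝒳 → ℝ) (P : Matrix 𝒳 𝒳 ℝ)

lemma xPath_succ (n : ℕ) (x : Fin (n + 1) → 𝒳) :
    xPath π P (n + 1) x = π (x 0) * ∏ i : Fin n, P (x i.castSucc) (x i.succ) := by
  rw [xPath, dif_pos n.succ_pos, Fin.prod_univ_castSucc, dif_neg (by simp), mul_one]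
  congr 1
  exact prod_congr rfl fun i _ => by rw [dif_pos (by simp)]; rfl

lemma xPath_succ_eq_mul (n : ℕ) (x : Fin (n + 1) → 𝒳) :
    xPath π P (n + 1) x = π (x 0) * xPath (fun _ => 1) P (n + 1) x := by
  rw [xPath_succ, xPath_succ, one_mul]

lemma xPath_snoc (n : ℕ) (x : Fin (n + 1) → 𝒳) (j : 𝒳) :
    xPath π P (n + 2) (Fin.snoc x j) = xPath π P (n + 1) x * P (x (Fin.last n)) j := by
  rw [xPath_succ, xPath_succ, Fin.prod_univ_castSucc, Fin.succ_last, Fin.snoc_last,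
    Fin.snoc_castSucc, mul_assoc]
  simp only [Fin.succ_castSucc, Fin.snoc_castSucc]
  rfl

lemma xPath_cons (n : ℕ) (c : 𝒳) (x : Fin (n + 1) → 𝒳) :
    xPath π P (n + 2) (Fin.cons c x) = π c * P c (x 0) * xPath (fun _ => 1) P (n + 1) x := by
  rw [xPath_succ, xPath_succ, Fin.prod_univ_succ]
  simp [mul_assoc]

lemma xPath_nonneg {π : 𝒳 → ℝ} (hπ : ∀ x, 0 ≤ π x) (hP0 : ∀ i j, 0 ≤ P i j) (n : ℕ)
    (x : Fin n → 𝒳) : 0 ≤ xPath π P n x := by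
  unfold xPath
  refine mul_nonneg ?_ (prod_nonneg fun i _ => ?_) <;> split_ifs
  exacts [hπ _, zero_le_one, hP0 _ _, zero_le_one]

variable [Fintype 𝒳]

lemma yPath_eq_pmfMap {𝒴 : Type*} [DecidableEq 𝒴] (g : 𝒳 → 𝒴) (n : ℕ) :
    yPath π P g n = pmfMap (fun x i => g (x i)) (xPath π P n) := by
  funext y
  simp [yPath, pmfMap, sum_filter, funext_iff]

variable [DecidableEq 𝒳]

lemma xyPath_eq_pmfMap {𝒴 : Type*} [DecidableEq 𝒴] (g : 𝒳 → 𝒴) (m : ℕ) (x₀ : 𝒳)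
    (y : Fin m → 𝒴) :
    xyPath π P g m x₀ y =
      pmfMap (fun x => (x 0, fun i => g (x i.succ))) (xPath π P (m + 1)) (x₀, y) := by
  simp [xyPath, pmfMap, sum_filter, funext_iff]

lemma pmfMap_init_xPath (hP1 : ∀ i, ∑ j, P i j = 1) (n : ℕ) :
    pmfMap Fin.init (xPath π P (n + 2)) = xPath π P (n + 1) := by
  funext x
  simp only [pmfMap_init_apply, xPath_snoc, ← mul_sum, hP1, mul_one]

lemma pmfMap_tail_xPath (hμ : ∀ j, ∑ i, μ i * P i j = μ j) (n : ℕ) :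
    pmfMap Fin.tail (xPath μ P (n + 2)) = xPath μ P (n + 1) := by
  funext x
  simp only [pmfMap_tail_apply, xPath_cons, ← sum_mul, hμ, ← xPath_succ_eq_mul]

/-- Given `X_2`, the variable `X_1` is independent of anything observed along `X_2 X_3 ⋯`. -/
lemma pmfMap_xPath_tail_head {α β : Type*} [Fintype α] [DecidableEq α] [Fintype β]
    [DecidableEq β] (n : ℕ) (U : (Fin (n + 1) → 𝒳) → α) (W : (Fin (n + 1) → 𝒳) → β) (a : α)
    (b : 𝒳 × β) (c : 𝒳) :
    pmfMap (fun x => (U (Fin.tail x), ((Fin.tail x 0, W (Fin.tail x)), x 0)))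
        (xPath π P (n + 2)) (a, (b, c)) =
      pmfMap (fun x => (U x, (x 0, W x))) (xPath (fun _ => 1) P (n + 1)) (a, b) *
        (π c * P c b.1) := by
  let G : (Fin (n + 1) → 𝒳) → α × 𝒳 × β := fun x => (U x, (x 0, W x))
  calc _ = pmfMap (fun x => (G (Fin.tail x), x 0)) (xPath π P (n + 2)) ((a, b), c) :=
        pmfMap_equiv_comp (Equiv.prodAssoc α (𝒳 × β) 𝒳) (fun x => (G (Fin.tail x), x 0))
          (xPath π P (n + 2)) (a, (b, c))
    _ = pmfMap G (fun x => (π c * P c (G x).2.1) * xPath (fun _ => 1) P (n + 1) x) (a, b) := by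
        rw [pmfMap_tail_head_apply]
        simp only [xPath_cons, G]
    _ = _ := (pmfMap_mul_comp G (fun q => π c * P c q.2.1) _ (a, b)).trans (mul_comm _ _)

/-- The Markov property `H(U | X_2, W, X_1) = H(U | X_2, W)` for observables `U`, `W` of the path
from time `2` on. -/
lemma condEntOf_xPath_markov {α β : Type*} [Fintype α] [DecidableEq α] [Fintype β]
    [DecidableEq β] (hμ0 : ∀ x, 0 ≤ μ x) (hP0 : ∀ i j, 0 ≤ P i j)
    (hμ : ∀ j, ∑ i, μ i * P i j = μ j) (n : ℕ)
    (U : (Fin (n + 1) → 𝒳) → α) (W : (Fin (n + 1) → 𝒳) → β) :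
    condEntOf (xPath μ P (n + 2)) (fun x => U (Fin.tail x))
        (fun x => ((Fin.tail x 0, W (Fin.tail x)), x 0)) =
      condEntOf (xPath μ P (n + 1)) U (fun x => (x 0, W x)) := by
  let G : (Fin (n + 1) → 𝒳) → α × 𝒳 × β := fun x => (U x, (x 0, W x))
  let v : 𝒳 × β → α → ℝ := fun b a => pmfMap G (xPath (fun _ => 1) P (n + 1)) (a, b)
  let w : 𝒳 → 𝒳 × β → ℝ := fun c b => μ c * P c b.1
  have hv : ∀ b a, 0 ≤ v b a := fun b a =>
    pmfMap_nonneg G (xPath_nonneg P (fun _ => zero_le_one) hP0 _) _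
  have hw : ∀ c b, 0 ≤ w c b := fun c b => mul_nonneg (hμ0 c) (hP0 _ _)
  have hjoint : pmfMap (fun x => (U (Fin.tail x), ((Fin.tail x 0, W (Fin.tail x)), x 0)))
      (xPath μ P (n + 2)) = fun q => v q.2.1 q.1 * w q.2.2 q.2.1 :=
    funext fun q => pmfMap_xPath_tail_head μ P n U W q.1 q.2.1 q.2.2
  have hmarg : pmfMap G (xPath μ P (n + 1)) = fun q => v q.2 q.1 * ∑ c, w c q.2 := by
    funext q
    simp only [v, w, hμ, mul_comm _ (μ _)]
    rw [funext (xPath_succ_eq_mul μ P n)]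
    exact pmfMap_mul_comp G (fun q => μ q.2.1) _ q
  unfold condEntOf
  rw [hjoint, hmarg]
  exact condEntPMF_of_condIndep hv hw

end MarkovPaths

def prodSnocEquiv (α β : Type*) (k : ℕ) : α × (Fin (k + 1) → β) ≃ β × α × (Fin k → β) where
  toFun r := (r.2 (Fin.last k), r.1, Fin.init r.2)
  invFun q := (q.2.1, Fin.snoc q.2.2 q.1)
  left_inv r := by simp
  right_inv q := by simp

section LumpabilityCost

variable {𝒳 𝒴 : Type*} [Fintype 𝒳] [DecidableEq 𝒳] [Fintype 𝒴] [DecidableEq 𝒴]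
  (μ : 𝒳 → ℝ) (P : Matrix 𝒳 𝒳 ℝ) (g : 𝒳 → 𝒴)

/-- `H(Y_1^n)`. -/
noncomputable def entY (n : ℕ) : ℝ :=
  entPMF (pmfMap (fun x i => g (x i)) (xPath μ P n))

/-- `H(X_1, Y_2^{m+1})`. -/
noncomputable def entXY (m : ℕ) : ℝ :=
  entPMF (pmfMap (fun x => (x 0, fun i : Fin m => g (x i.succ))) (xPath μ P (m + 1)))

/-- `H(Y_{k+2} | Y_1^{k+1})`. -/
noncomputable def condEntY (k : ℕ) : ℝ :=
  condEntOf (xPath μ P (k + 2)) (fun x => g (x (Fin.last (k + 1))))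
    (fun x (i : Fin (k + 1)) => g (x i.castSucc))

/-- `H(Y_{k+2} | X_1, Y_2^{k+1})`. -/
noncomputable def condEntXY (k : ℕ) : ℝ :=
  condEntOf (xPath μ P (k + 2)) (fun x => g (x (Fin.last (k + 1))))
    (fun x => (x 0, fun i : Fin k => g (x i.succ.castSucc)))

lemma lumpCost_eq (k : ℕ) : lumpCost μ P g k = condEntY μ P g k - condEntXY μ P g k := by
  have hY : (fun q : 𝒴 × (Fin (k + 1) → 𝒴) => yPath μ P g (k + 2) (Fin.snoc q.2 q.1)) =
      pmfMap ((Fin.snocEquiv fun _ => 𝒴).symm ∘ fun x i => g (x i)) (xPath μ P (k + 2)) := by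
    funext q
    rw [pmfMap_equiv_comp, yPath_eq_pmfMap]
    rfl
  have hXY : (fun q : 𝒴 × 𝒳 × (Fin k → 𝒴) => xyPath μ P g (k + 1) q.2.1 (Fin.snoc q.2.2 q.1)) =
      pmfMap (prodSnocEquiv 𝒳 𝒴 k ∘ fun x => (x 0, fun i => g (x i.succ)))
        (xPath μ P (k + 2)) := by
    funext q
    rw [pmfMap_equiv_comp, xyPath_eq_pmfMap]
    rfl
  rw [lumpCost, hY, hXY]
  rfl

variable {μ P}

lemma condEntXY_le_condEntY (hμ0 : ∀ x, 0 ≤ μ x) (hP0 : ∀ i j, 0 ≤ P i j) (k : ℕ) :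
    condEntXY μ P g k ≤ condEntY μ P g k := by
  have hcons : (fun (x : Fin (k + 2) → 𝒳) (i : Fin (k + 1)) => g (x i.castSucc)) =
      fun x => Fin.cons (g (x 0)) fun i : Fin k => g (x i.succ.castSucc) :=
    funext fun x => (Fin.cons_self_tail _).symm
  rw [condEntY, hcons]
  exact condEntOf_le_comp (xPath_nonneg P hμ0 hP0 _) (fun x => g (x (Fin.last (k + 1))))
    (fun x => (x 0, fun i : Fin k => g (x i.succ.castSucc)))
    fun r : 𝒳 × (Fin k → 𝒴) => (Fin.cons (g r.1) r.2 : Fin (k + 1) → 𝒴)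

lemma condEntY_succ_le (hμ0 : ∀ x, 0 ≤ μ x) (hP0 : ∀ i j, 0 ≤ P i j)
    (hμ : ∀ j, ∑ i, μ i * P i j = μ j) (k : ℕ) :
    condEntY μ P g (k + 1) ≤ condEntY μ P g k := by
  have hshift := condEntOf_pmfMap Fin.tail (xPath μ P (k + 3))
    (fun x => g (x (Fin.last (k + 1)))) fun x (i : Fin (k + 1)) => g (x i.castSucc)
  rw [pmfMap_tail_xPath μ P hμ] at hshift
  rw [condEntY, condEntY, hshift]
  exact condEntOf_le_comp (xPath_nonneg P hμ0 hP0 _) _ _ Fin.tail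

lemma condEntXY_le_succ (hμ0 : ∀ x, 0 ≤ μ x) (hP0 : ∀ i j, 0 ≤ P i j)
    (hμ : ∀ j, ∑ i, μ i * P i j = μ j) (k : ℕ) :
    condEntXY μ P g k ≤ condEntXY μ P g (k + 1) := by
  have hcons :
      (fun x : Fin (k + 3) → 𝒳 => (x 0, fun i : Fin (k + 1) => g (x i.succ.castSucc))) =
        fun x => (x 0, Fin.cons (g (Fin.tail x 0))
          fun i : Fin k => g (Fin.tail x i.succ.castSucc)) :=
    funext fun x => Prod.ext rfl (Fin.cons_self_tail _).symm
  rw [condEntXY, condEntXY, hcons, ← condEntOf_xPath_markov μ P hμ0 hP0 hμ (k + 1)]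
  exact condEntOf_le_comp (xPath_nonneg P hμ0 hP0 _) _ _
    fun r : (𝒳 × (Fin k → 𝒴)) × 𝒳 => (r.2, (Fin.cons (g r.1.1) r.1.2 : Fin (k + 1) → 𝒴))

lemma condEntY_eq_sub (hP1 : ∀ i, ∑ j, P i j = 1) (k : ℕ) :
    condEntY μ P g k = entY μ P g (k + 2) - entY μ P g (k + 1) := by
  have hjoint : (fun x : Fin (k + 2) → 𝒳 => (g (x (Fin.last (k + 1))),
      fun i : Fin (k + 1) => g (x i.castSucc))) =
      (Fin.snocEquiv fun _ => 𝒴).symm ∘ fun x i => g (x i) :=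
    rfl
  rw [condEntY, condEntOf_eq_sub, hjoint, entPMF_pmfMap_equiv_comp, entY, entY,
    ← pmfMap_init_xPath μ P hP1 k, pmfMap_pmfMap]
  rfl

lemma condEntXY_eq_sub (hP1 : ∀ i, ∑ j, P i j = 1) (k : ℕ) :
    condEntXY μ P g k = entXY μ P g (k + 1) - entXY μ P g k := by
  have hjoint : (fun x : Fin (k + 2) → 𝒳 => (g (x (Fin.last (k + 1))),
      x 0, fun i : Fin k => g (x i.succ.castSucc))) =
      prodSnocEquiv 𝒳 𝒴 k ∘ fun x => (x 0, fun i => g (x i.succ)) :=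
    rfl
  rw [condEntXY, condEntOf_eq_sub, hjoint, entPMF_pmfMap_equiv_comp, entXY, entXY,
    ← pmfMap_init_xPath μ P hP1 k, pmfMap_pmfMap]
  rfl

lemma entY_succ_le_entXY (hμ0 : ∀ x, 0 ≤ μ x) (hP0 : ∀ i j, 0 ≤ P i j) (m : ℕ) :
    entY μ P g (m + 1) ≤ entXY μ P g m := by
  have hcons : (fun (x : Fin (m + 1) → 𝒳) i => g (x i)) =
      (fun r : 𝒳 × (Fin m → 𝒴) => (Fin.cons (g r.1) r.2 : Fin (m + 1) → 𝒴)) ∘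
        fun x => (x 0, fun i => g (x i.succ)) :=
    funext fun x => (Fin.cons_self_tail _).symm
  rw [entY, entXY, hcons, ← pmfMap_pmfMap]
  exact entPMF_pmfMap_le _ (pmfMap_nonneg _ (xPath_nonneg P hμ0 hP0 _))

lemma sum_range_lumpCost_le (hμ0 : ∀ x, 0 ≤ μ x) (hP0 : ∀ i j, 0 ≤ P i j)
    (hP1 : ∀ i, ∑ j, P i j = 1) (n : ℕ) :
    ∑ k ∈ range n, lumpCost μ P g k ≤ entXY μ P g 0 - entY μ P g 1 := by
  have hstep : ∀ k, lumpCost μ P g k =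
      (entY μ P g (k + 2) - entXY μ P g (k + 1)) - (entY μ P g (k + 1) - entXY μ P g k) := by
    intro k
    rw [lumpCost_eq, condEntY_eq_sub g hP1, condEntXY_eq_sub g hP1]
    ring
  simp only [hstep]
  rw [sum_range_sub (fun k => entY μ P g (k + 1) - entXY μ P g k)]
  linarith [entY_succ_le_entXY g hμ0 hP0 n]

end LumpabilityCost

theorem stmt10_general {𝒳 𝒴 : Type*} [Fintype 𝒳] [DecidableEq 𝒳] [Fintype 𝒴] [DecidableEq 𝒴]
    (P : Matrix 𝒳 𝒳 ℝ) (hP0 : ∀ i j, 0 ≤ P i j) (hP1 : ∀ i, ∑ j : 𝒳, P i j = 1)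
    (μ : 𝒳 → ℝ) (hμ0 : ∀ x, 0 ≤ μ x)
    (hμ2 : ∀ j, ∑ i : 𝒳, μ i * P i j = μ j) (g : 𝒳 → 𝒴) :
    (∀ k : ℕ, lumpCost μ P g (k + 1) ≤ lumpCost μ P g k) ∧
    Tendsto (fun k : ℕ => lumpCost μ P g k) atTop (nhds 0) := by
  have hnonneg : ∀ k, 0 ≤ lumpCost μ P g k := fun k => by
    rw [lumpCost_eq]
    exact sub_nonneg.mpr (condEntXY_le_condEntY g hμ0 hP0 k)
  refine ⟨fun k => ?_, ?_⟩
  · rw [lumpCost_eq, lumpCost_eq]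
    linarith [condEntY_succ_le g hμ0 hP0 hμ2 k, condEntXY_le_succ g hμ0 hP0 hμ2 k]
  · exact (summable_of_sum_range_le hnonneg
      (sum_range_lumpCost_le g hμ0 hP0 hP1)).tendsto_atTop_zero

/-- the lumpability cost is non-increasing in the order, Δ_L^k ≥ Δ_L^{k+1}
for every k ≥ 1, and Δ_L^k(X, g) → 0 as k → ∞.  (Here `lumpCost μ P g k` is Δ_L^{k+1}, so the
monotonicity statement below ranges over all orders ≥ 1.) -/
theorem stmt10 {𝒳 𝒴 : Type*} [Fintype 𝒳] [DecidableEq 𝒳] [Fintype 𝒴] [DecidableEq 𝒴]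
    (P : Matrix 𝒳 𝒳 ℝ) (hP0 : ∀ i j, 0 ≤ P i j) (hP1 : ∀ i, ∑ j : 𝒳, P i j = 1)
    (hprim : PrimitiveMatrix P)
    (μ : 𝒳 → ℝ) (hμ0 : ∀ x, 0 ≤ μ x) (hμ1 : ∑ x : 𝒳, μ x = 1)
    (hμ2 : ∀ j, ∑ i : 𝒳, μ i * P i j = μ j) (g : 𝒳 → 𝒴) :
    (∀ k : ℕ, lumpCost μ P g (k + 1) ≤ lumpCost μ P g k) ∧
    Tendsto (fun k : ℕ => lumpCost μ P g k) atTop (nhds 0) :=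
  stmt10_general P hP0 hP1 μ hμ0 hμ2 g
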